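/- arXiv:1602.01298 — 4 statements merged into one kernel-verified Lean document; each statement's English description precedes it below -/
import Mathlib

section
/- If ψ is a proper coloring of a graph G with k colors (k ≥ 2) and some color class i contains no b-vertex (i.e., no vertex of color i sees all other k−1 colors in its neighborhood), then G admits a proper coloring with k−1 colors. -/
/-- `u` is a b-vertex of the coloring `ψ`: every other color appears in its neighborhood. -/
def IsBVertex {V : Type*} (G : SimpleGraph V) {k : ℕ} (ψ : V → Fin k) (u : V) : Prop :=
  ∀ c : Fin k, c ≠ ψ u → ∃ v, G.Adj u v ∧ ψ v = c

theorem stmt0 {V : Type*} [Fintype V] (G : SimpleGraph V) (k : ℕ) (hk : 2 ≤ k)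
    (ψ : V → Fin k)
    (hproper : ∀ u v, G.Adj u v → ψ u ≠ ψ v) (hsurj : Function.Surjective ψ)
    (i : Fin k) (hi : ∀ u, ψ u = i → ¬ IsBVertex G ψ u) :
    ∃ φ : V → Fin (k - 1), ∀ u v, G.Adj u v → φ u ≠ φ v := by
  classical
  have key : ∀ u, ψ u = i → ∃ c : Fin k, c ≠ i ∧ ∀ v, G.Adj u v → ψ v ≠ c := by
    intro u hu
    have h := hi u hu
    unfold IsBVertex at h
    push_neg at h
    obtain ⟨c, hc, hv⟩ := h
    exact ⟨c, hu ▸ hc, fun v hadj heq => hv v hadj heq⟩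
  set ψ' : V → Fin k := fun u => if h : ψ u = i then (key u h).choose else ψ u with hψ'
  have hne : ∀ u, ψ' u ≠ i := by
    intro u
    simp only [hψ']
    split
    · exact (key u ‹_›).choose_spec.1
    · assumption
  have hprop' : ∀ u v, G.Adj u v → ψ' u ≠ ψ' v := by
    intro u v hadj
    simp only [hψ']
    split <;> split
    · exact absurd (‹ψ u = i›.trans ‹ψ v = i›.symm) (hproper u v hadj)
    · intro h; exact (key u ‹_›).choose_spec.2 v hadj h.symm
    · intro h; exact (key v ‹_›).choose_spec.2 u hadj.symm h
    · exact hproper u v hadj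
  have hik : (i : ℕ) < k := i.isLt
  refine ⟨fun u => if h : (ψ' u).val < i.val then ⟨(ψ' u).val, by omega⟩
      else ⟨(ψ' u).val - 1, by have := (ψ' u).isLt; omega⟩, fun u v hadj h => ?_⟩
  dsimp only at h
  have h1 := hprop' u v hadj
  have hc : (ψ' u).val ≠ (ψ' v).val := fun e => h1 (Fin.ext e)
  have hc2 : (ψ' u).val ≠ i.val := fun e => hne u (Fin.ext e)
  have hc3 : (ψ' v).val ≠ i.val := fun e => hne v (Fin.ext e)
  have hv1 := (ψ' u).isLt
  have hv2 := (ψ' v).isLt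
  split_ifs at h <;> simp only [Fin.mk.injEq] at h <;> omega
end

section
/- For every graph G, the b-chromatic number b(G) is at most m(G), where m(G) is the largest integer k such that G has at least k vertices of degree at least k−1. -/
/-- A b-coloring with `k` colors: proper, and every color class contains a b-vertex. -/
def IsBColoring {V : Type*} (G : SimpleGraph V) (k : ℕ) (ψ : V → Fin k) : Prop :=
  (∀ u v, G.Adj u v → ψ u ≠ ψ v) ∧ ∀ c : Fin k, ∃ u, ψ u = c ∧ IsBVertex G ψ u

/-- The b-chromatic number: the largest `k` admitting a b-coloring with `k` colors. -/
noncomputable def bChromaticNumber {V : Type*} [Fintype V] (G : SimpleGraph V) : ℕ :=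
  sSup {k | ∃ ψ : V → Fin k, IsBColoring G k ψ}

/-- `m(G)`: the largest `k` such that at least `k` vertices have degree at least `k - 1`. -/
noncomputable def mDegree {V : Type*} [Fintype V] (G : SimpleGraph V) : ℕ :=
  sSup {k | k ≤ {v : V | k - 1 ≤ (G.neighborSet v).ncard}.ncard}

/-!
A b-vertex sees all `k - 1` other colors among its neighbours, so it has degree at least `k - 1`.
Choosing one b-vertex in each of the `k` color classes gives `k` distinct such vertices, so every
`k` admitting a b-coloring lies in the set whose supremum is `m(G)`.
-/

section

variable {V : Type*} {G : SimpleGraph V} {k : ℕ} {ψ : V → Fin k}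

theorem IsBVertex.sub_one_le_ncard_neighborSet [Finite V] {u : V} (hu : IsBVertex G ψ u) :
    k - 1 ≤ (G.neighborSet u).ncard :=
  calc k - 1 = ({ψ u}ᶜ : Set (Fin k)).ncard := by
        rw [Set.ncard_compl, Set.ncard_singleton, Nat.card_fin]
    _ ≤ (ψ '' G.neighborSet u).ncard := Set.ncard_le_ncard hu
    _ ≤ (G.neighborSet u).ncard := Set.ncard_image_le

theorem IsBColoring.le_ncard_setOf_sub_one_le_ncard_neighborSet [Finite V]
    (hψ : IsBColoring G k ψ) : k ≤ {v : V | k - 1 ≤ (G.neighborSet v).ncard}.ncard := by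
  choose b hψb hb using hψ.2
  have hb_inj : Function.Injective b := fun c c' h => by rw [← hψb c, ← hψb c', h]
  calc k = (Set.range b).ncard := by rw [Set.ncard_range_of_injective hb_inj, Nat.card_fin]
    _ ≤ _ := Set.ncard_le_ncard (Set.range_subset_iff.2 fun c =>
        (hb c).sub_one_le_ncard_neighborSet)

theorem bddAbove_setOf_le_ncard [Finite V] (p : ℕ → V → Prop) :
    BddAbove {k | k ≤ {v : V | p k v}.ncard} :=
  ⟨Nat.card V, fun _ hk => hk.trans (Set.ncard_le_card _)⟩

end

theorem stmt1 {V : Type*} [Fintype V] (G : SimpleGraph V) :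
    bChromaticNumber G ≤ mDegree G :=
  csSup_le_csSup' (bddAbove_setOf_le_ncard _) fun _ ⟨_, hψ⟩ =>
    hψ.le_ncard_setOf_sub_one_le_ncard_neighborSet
end

section
/- Let ψ be a minimal b-coloring of G with k colors, k ≥ χ(G)+1, and x a non-b-vertex that is mutable with |ψ(U(x))| = 1. Then G has a b-coloring with k−1 colors. -/
/-- A b-coloring with `k` colors minimizing the number of b-vertices. -/
def MinimalBColoring {V : Type*} (G : SimpleGraph V) (k : ℕ) (ψ : V → Fin k) : Prop :=
  IsBColoring G k ψ ∧ ∀ φ : V → Fin k, IsBColoring G k φ →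
    {u | IsBVertex G ψ u}.ncard ≤ {u | IsBVertex G φ u}.ncard

/-- `U(x)`: the b-vertices `w` such that `x` is the unique neighbor of `w` colored `ψ x`. -/
def USet {V : Type*} (G : SimpleGraph V) {k : ℕ} (ψ : V → Fin k) (x : V) : Set V :=
  {w | IsBVertex G ψ w ∧ {v | G.Adj w v ∧ ψ v = ψ x} = {x}}

/-- `x` is mutable: there is a safe color `i` outside `ψ(N[x])` such that changing the color
of `x` to `i` creates no new b-vertex among the non-b-vertex neighbors of `x`. -/
def Mutable {V : Type*} (G : SimpleGraph V) {k : ℕ} (ψ : V → Fin k) (x : V) : Prop :=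
  ∃ i : Fin k, i ∉ ψ '' (insert x (G.neighborSet x)) ∧
    ∀ w, G.Adj x w → ¬ IsBVertex G ψ w →
      {c : Fin k | c ∉ ψ '' ((insert w (G.neighborSet w)) \ {x})} ≠ {i}

open Function

section

variable {V : Type*} {G : SimpleGraph V} {k : ℕ} {ψ : V → Fin k}

theorem not_isBVertex_iff {u : V} :
    ¬ IsBVertex G ψ u ↔ ∃ c, c ≠ ψ u ∧ ∀ v, G.Adj u v → ψ v ≠ c := by
  simp [IsBVertex]

theorem MinimalBColoring.not_isBColoring_of_ssubset [Finite V] (hmin : MinimalBColoring G k ψ)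
    {φ : V → Fin k} (hfewer : {u | IsBVertex G φ u} ⊂ {u | IsBVertex G ψ u}) :
    ¬ IsBColoring G k φ := fun hφ =>
  (Set.ncard_lt_ncard hfewer (Set.toFinite _)).not_ge (hmin.2 φ hφ)

theorem exists_isBColoring_of_colorClass_without_isBVertex {n : ℕ} {ψ : V → Fin (n + 1)}
    (hψ : ∀ u v, G.Adj u v → ψ u ≠ ψ v) (c : Fin (n + 1))
    (hb : ∀ d, d ≠ c → ∃ u, ψ u = d ∧ IsBVertex G ψ u)
    (hc : ∀ u, ψ u = c → ¬ IsBVertex G ψ u) :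
    ∃ φ : V → Fin n, IsBColoring G n φ := by
  have hrecolor : ∀ v, ∃ z : Fin n, (ψ v ≠ c → c.succAbove z = ψ v) ∧
      (ψ v = c → ∀ w, G.Adj v w → ψ w ≠ c.succAbove z) := by
    intro v
    by_cases hv : ψ v = c
    · obtain ⟨d, hdv, hd⟩ := not_isBVertex_iff.mp (hc v hv)
      obtain ⟨z, rfl⟩ := Fin.exists_succAbove_eq (hv ▸ hdv)
      exact ⟨z, fun h => absurd hv h, fun _ => hd⟩
    · obtain ⟨z, hz⟩ := Fin.exists_succAbove_eq hv
      exact ⟨z, fun _ => hz, fun h => absurd h hv⟩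
  choose φ hφ_keep hφ_miss using hrecolor
  refine ⟨φ, fun u v huv hφuv => ?_, fun e => ?_⟩
  · by_cases hu : ψ u = c <;> by_cases hv : ψ v = c
    · exact hψ u v huv (hu.trans hv.symm)
    · exact hφ_miss u hu v huv (by rw [← hφ_keep v hv, hφuv])
    · exact hφ_miss v hv u huv.symm (by rw [← hφ_keep u hu, hφuv])
    · exact hψ u v huv (by rw [← hφ_keep u hu, ← hφ_keep v hv, hφuv])
  · obtain ⟨u, hue, hub⟩ := hb (c.succAbove e) (Fin.succAbove_ne c e)
    have hu : ψ u ≠ c := hue ▸ Fin.succAbove_ne c e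
    have hφu : φ u = e := Fin.succAbove_right_injective ((hφ_keep u hu).trans hue)
    refine ⟨u, hφu, fun e' he' => ?_⟩
    obtain ⟨v, huv, hve'⟩ := hub (c.succAbove e') (by
      rw [hue, Ne, Fin.succAbove_right_inj]; exact hφu ▸ he')
    have hv : ψ v ≠ c := hve' ▸ Fin.succAbove_ne c e'
    exact ⟨v, huv, Fin.succAbove_right_injective ((hφ_keep v hv).trans hve')⟩

variable [DecidableEq V] {x : V} {i : Fin k}

theorem update_adj_ne (hψ : ∀ u v, G.Adj u v → ψ u ≠ ψ v)
    (hiN : ∀ w, G.Adj x w → ψ w ≠ i) :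
    ∀ u v, G.Adj u v → update ψ x i u ≠ update ψ x i v := by
  intro u v huv
  by_cases hu : u = x
  · subst hu
    rw [update_self, update_of_ne huv.ne.symm]
    exact (hiN v huv).symm
  · by_cases hv : v = x
    · subst hv
      rw [update_self, update_of_ne hu]
      exact hiN u huv.symm
    · rw [update_of_ne hu, update_of_ne hv]
      exact hψ u v huv

theorem isBVertex_update_iff_of_not_adj {w : V} (hwx : w ≠ x) (hxw : ¬ G.Adj w x) :
    IsBVertex G (update ψ x i) w ↔ IsBVertex G ψ w := by
  have hN : ∀ v, G.Adj w v → update ψ x i v = ψ v := fun v hv =>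
    update_of_ne (fun h => hxw (by rwa [h] at hv)) _ _
  simp only [IsBVertex, update_of_ne hwx]
  exact forall₂_congr fun c _ => exists_congr fun v => and_congr_right fun hv => by rw [hN v hv]

theorem not_isBVertex_update_self (hψ : ∀ u v, G.Adj u v → ψ u ≠ ψ v) (hix : ψ x ≠ i) :
    ¬ IsBVertex G (update ψ x i) x := by
  refine not_isBVertex_iff.mpr ⟨ψ x, by rwa [update_self], fun v hxv => ?_⟩
  rw [update_of_ne hxv.ne.symm]
  exact (hψ x v hxv).symm

theorem not_isBVertex_update_of_mem_uSet (hψ : ∀ u v, G.Adj u v → ψ u ≠ ψ v) (hix : ψ x ≠ i)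
    {w : V} (hw : w ∈ USet G ψ x) : ¬ IsBVertex G (update ψ x i) w := by
  obtain ⟨-, hunique⟩ := hw
  have hx : x ∈ {v | G.Adj w v ∧ ψ v = ψ x} := hunique ▸ Set.mem_singleton x
  have hwx : G.Adj w x := hx.1
  refine not_isBVertex_iff.mpr ⟨ψ x, ?_, fun v hwv hv => ?_⟩
  · rw [update_of_ne hwx.ne]
    exact (hψ w x hwx).symm
  · by_cases hvx : v = x
    · subst hvx
      rw [update_self] at hv
      exact hix hv.symm
    · rw [update_of_ne hvx] at hv
      exact hvx (hunique ▸ ⟨hwv, hv⟩ : v ∈ ({x} : Set V))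

theorem isBVertex_update_of_notMem_uSet {w : V} (hb : IsBVertex G ψ w) (hwU : w ∉ USet G ψ x)
    (hwx : w ≠ x) : IsBVertex G (update ψ x i) w := by
  intro d hd
  rw [update_of_ne hwx] at hd
  obtain ⟨v, hwv, hvd⟩ := hb d hd
  by_cases hvx : v = x
  · subst hvx
    obtain ⟨v', ⟨hwv', hv'⟩, hv'v⟩ : ∃ v' ∈ {u | G.Adj w u ∧ ψ u = ψ v}, v' ≠ v := by
      by_contra! h
      exact hwU ⟨hb, Set.eq_singleton_iff_unique_mem.mpr ⟨⟨hwv, rfl⟩, h⟩⟩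
    exact ⟨v', hwv', by rw [update_of_ne hv'v, hv', hvd]⟩
  · exact ⟨v, hwv, by rw [update_of_ne hvx, hvd]⟩

theorem not_isBVertex_update_of_adj (hiN : ∀ w, G.Adj x w → ψ w ≠ i) {w : V} (hxw : G.Adj x w)
    (hw : ¬ IsBVertex G ψ w)
    (hmut : {c : Fin k | c ∉ ψ '' ((insert w (G.neighborSet w)) \ {x})} ≠ {i}) :
    ¬ IsBVertex G (update ψ x i) w := by
  intro hb
  have hwx : w ≠ x := hxw.ne.symm
  rw [IsBVertex, update_of_ne hwx] at hb
  obtain ⟨d, hdw, hd⟩ := not_isBVertex_iff.mp hw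
  apply hmut
  ext e
  simp only [Set.mem_ofPred_eq, Set.mem_singleton_iff, Set.mem_image, Set.mem_sdiff,
    Set.mem_insert_iff, SimpleGraph.mem_neighborSet, not_exists, not_and]
  constructor
  · intro he
    by_contra hei
    by_cases hew : e = ψ w
    · exact he w ⟨Or.inl rfl, hwx⟩ hew.symm
    · obtain ⟨v, hwv, hve⟩ := hb e hew
      by_cases hvx : v = x
      · subst hvx
        exact hei (by rwa [update_self, eq_comm] at hve)
      · rw [update_of_ne hvx] at hve
        exact he v ⟨Or.inr hwv, hvx⟩ hve
  · rintro rfl v ⟨rfl | hwv, hvx⟩ hve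
    · exact hiN v hxw hve
    · -- `w` misses `d` under `ψ`, and after recoloring only `x` can supply it, so `d = i`
      obtain ⟨u, hwu, hud⟩ := hb d hdw
      by_cases hux : u = x
      · subst hux
        rw [update_self] at hud
        exact hd v hwv (hve.trans hud)
      · rw [update_of_ne hux] at hud
        exact hd u hwu hud

theorem setOf_isBVertex_update_subset (hψ : ∀ u v, G.Adj u v → ψ u ≠ ψ v) (hix : ψ x ≠ i)
    (hiN : ∀ w, G.Adj x w → ψ w ≠ i)
    (hmut : ∀ w, G.Adj x w → ¬ IsBVertex G ψ w →
      {c : Fin k | c ∉ ψ '' ((insert w (G.neighborSet w)) \ {x})} ≠ {i}) :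
    {u | IsBVertex G (update ψ x i) u} ⊆ {u | IsBVertex G ψ u} := by
  intro w hw
  by_cases hwx : w = x
  · subst hwx
    exact absurd hw (not_isBVertex_update_self hψ hix)
  by_cases hxw : G.Adj x w
  · by_contra hnb
    exact not_isBVertex_update_of_adj hiN hxw hnb (hmut w hxw hnb) hw
  · exact (isBVertex_update_iff_of_not_adj hwx (fun h => hxw h.symm)).mp hw

end

theorem stmt12_general {V : Type*} [Fintype V] (G : SimpleGraph V) (k : ℕ) (ψ : V → Fin k)
    (hmin : MinimalBColoring G k ψ) (x : V) (hx : ¬ IsBVertex G ψ x)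
    (hmut : Mutable G ψ x) (hU : (ψ '' USet G ψ x).ncard = 1) :
    ∃ φ : V → Fin (k - 1), IsBColoring G (k - 1) φ := by
  classical
  obtain ⟨hψ, hbex⟩ := hmin.1
  obtain ⟨i, hsafe, hmut⟩ := hmut
  have hix : ψ x ≠ i := fun h => hsafe ⟨x, Set.mem_insert x _, h⟩
  have hiN : ∀ w, G.Adj x w → ψ w ≠ i := fun w hw h => hsafe ⟨w, Set.mem_insert_of_mem x hw, h⟩
  obtain ⟨c, hc⟩ := Set.ncard_eq_one.mp hU
  obtain ⟨w₀, hw₀, -⟩ : c ∈ ψ '' USet G ψ x := hc ▸ Set.mem_singleton c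
  have hψ' := update_adj_ne hψ hiN
  have hfewer : {u | IsBVertex G (update ψ x i) u} ⊂ {u | IsBVertex G ψ u} :=
    (Set.ssubset_iff_of_subset (setOf_isBVertex_update_subset hψ hix hiN hmut)).mpr
      ⟨w₀, hw₀.1, not_isBVertex_update_of_mem_uSet hψ hix hw₀⟩
  have hb : ∀ d, d ≠ c → ∃ u, update ψ x i u = d ∧ IsBVertex G (update ψ x i) u := by
    intro d hdc
    obtain ⟨u, hud, hub⟩ := hbex d
    have hux : u ≠ x := fun h => hx (h ▸ hub)
    have huU : u ∉ USet G ψ x := fun h => hdc (hud ▸ hc.subset ⟨u, h, rfl⟩)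
    exact ⟨u, by rw [update_of_ne hux, hud], isBVertex_update_of_notMem_uSet hub huU hux⟩
  have hcfree : ∀ u, update ψ x i u = c → ¬ IsBVertex G (update ψ x i) u := fun u huc hub =>
    hmin.not_isBColoring_of_ssubset hfewer ⟨hψ', fun d =>
      if hdc : d = c then ⟨u, hdc ▸ huc, hub⟩ else hb d hdc⟩
  obtain ⟨n, rfl⟩ := Nat.exists_eq_succ_of_ne_zero (ψ x).pos.ne'
  exact exists_isBColoring_of_colorClass_without_isBVertex hψ' c hb hcfree

theorem stmt12 {V : Type*} [Fintype V] (G : SimpleGraph V) (k : ℕ)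
    (hk : G.chromaticNumber + 1 ≤ (k : ℕ∞)) (ψ : V → Fin k)
    (hmin : MinimalBColoring G k ψ) (x : V) (hx : ¬ IsBVertex G ψ x)
    (hmut : Mutable G ψ x) (hU : (ψ '' USet G ψ x).ncard = 1) :
    ∃ φ : V → Fin (k - 1), IsBColoring G (k - 1) φ :=
  stmt12_general G k ψ hmin x hx hmut hU
end

section
/- For every n ≥ 2, the graph K_{n,n} minus a perfect matching has a b-coloring with 2 colors and a b-coloring with n colors. -/
/-- `K_{n,n}` minus a perfect matching: `a i` is adjacent to `b j` iff `i ≠ j`. -/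
def crownGraph (n : ℕ) : SimpleGraph (Fin n ⊕ Fin n) where
  Adj x y := ∃ i j : Fin n, i ≠ j ∧
    ((x = Sum.inl i ∧ y = Sum.inr j) ∨ (x = Sum.inr j ∧ y = Sum.inl i))
  symm := by
    constructor
    rintro x y ⟨i, j, hij, h | h⟩ <;> exact ⟨i, j, hij, by tauto⟩
  loopless := by
    constructor
    rintro x ⟨i, j, hij, ⟨h1, h2⟩ | ⟨h1, h2⟩⟩ <;> simp_all

/-!
Color each side of the bipartition with its own color: since `n ≥ 2`, every vertex has a
neighbor, and with only two colors any vertex with a neighbor is a b-vertex. For `n` colors,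
give `a i` and `b i` the color `i`; this is proper because `a i` and `b i` are not adjacent,
and every vertex `a i` sees all other colors through the vertices `b j`, `j ≠ i`.
-/

variable {V : Type*} {G : SimpleGraph V}

lemma isBVertex_of_adj_of_ne {ψ : V → Fin 2} {u v : V} (huv : G.Adj u v) (hψ : ψ u ≠ ψ v) :
    IsBVertex G ψ u := by
  intro c hc
  refine ⟨v, huv, ?_⟩
  omega

namespace crownGraph

variable {n : ℕ}

@[simp]
lemma adj_inl_inr {i j : Fin n} : (crownGraph n).Adj (.inl i) (.inr j) ↔ i ≠ j := by
  constructor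
  · rintro ⟨i', j', hne, ⟨hi, hj⟩ | ⟨hi, hj⟩⟩
    · cases hi; cases hj; exact hne
    · cases hi
  · exact fun h => ⟨i, j, h, .inl ⟨rfl, rfl⟩⟩

@[simp]
lemma adj_inr_inl {i j : Fin n} : (crownGraph n).Adj (.inr j) (.inl i) ↔ i ≠ j := by
  rw [SimpleGraph.adj_comm, adj_inl_inr]

@[simp]
lemma not_adj_inl_inl {i j : Fin n} : ¬ (crownGraph n).Adj (.inl i) (.inl j) := by
  rintro ⟨i', j', -, ⟨-, h⟩ | ⟨h, -⟩⟩ <;> cases h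

@[simp]
lemma not_adj_inr_inr {i j : Fin n} : ¬ (crownGraph n).Adj (.inr i) (.inr j) := by
  rintro ⟨i', j', -, ⟨h, -⟩ | ⟨-, h⟩⟩ <;> cases h

lemma isBColoring_sides (hn : 2 ≤ n) :
    IsBColoring (crownGraph n) 2 (Sum.elim (fun _ => 0) (fun _ => 1)) := by
  have h01 : (⟨0, by omega⟩ : Fin n) ≠ ⟨1, by omega⟩ := by simp
  refine ⟨?_, ?_⟩
  · rintro (i | i) (j | j) h <;> simp_all
  · intro c
    fin_cases c
    · exact ⟨.inl ⟨0, by omega⟩, rfl, isBVertex_of_adj_of_ne (v := .inr ⟨1, by omega⟩)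
        (adj_inl_inr.mpr h01) (by simp)⟩
    · exact ⟨.inr ⟨0, by omega⟩, rfl, isBVertex_of_adj_of_ne (v := .inl ⟨1, by omega⟩)
        (adj_inr_inl.mpr h01.symm) (by simp)⟩

lemma isBColoring_index : IsBColoring (crownGraph n) n (Sum.elim id id) := by
  refine ⟨?_, fun c => ⟨.inl c, rfl, fun d hd => ⟨.inr d, adj_inl_inr.mpr (Ne.symm hd), rfl⟩⟩⟩
  rintro (i | i) (j | j) h <;> simp_all [eq_comm]

end crownGraph

theorem stmt14 (n : ℕ) (hn : 2 ≤ n) :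
    (∃ ψ : (Fin n ⊕ Fin n) → Fin 2, IsBColoring (crownGraph n) 2 ψ) ∧
    (∃ ψ : (Fin n ⊕ Fin n) → Fin n, IsBColoring (crownGraph n) n ψ) :=
  ⟨⟨_, crownGraph.isBColoring_sides hn⟩, ⟨_, crownGraph.isBColoring_index⟩⟩
end
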